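/- Define φ on Dyck paths D = P Q R (with P, Q, R as in the decomposition, and Q with prime decomposition n_0 Q_1 n_1 ⋯ n_k Q_k) by: (1) if n_1 ≠ ∅, φ(D) = P Q_1 n_1 ⋯ n_k Q_k n_0 R. Then in case (1), φ(D) is a Dyck path of the same semilength with returns(φ(D)) = returns(D) + 1 and ldr(φ(D)) = ldr(D) + 1. -/

import Mathlib

/-!
Dyck paths are encoded as lists of booleans: `true` is a north step `(0,1)`,
`false` is an east step `(1,0)`.  A Dyck path of semilength `n` goes from
`(0,0)` to `(n,n)` staying weakly above the diagonal `y = x`.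
-/

/-- `D` is a Dyck word: every prefix has at least as many north steps as east
steps, and the total numbers agree. -/
def isDyck (D : List Bool) : Bool :=
  ((List.range (D.length + 1)).all fun k =>
    (D.take k).count false ≤ (D.take k).count true) &&
  (D.count true == D.count false)

/-- The (finite) set of Dyck paths of semilength `n`. -/
def dyckPaths (n : ℕ) : Finset (List Bool) :=
  ((List.replicate n true ++ List.replicate n false).permutations.filter isDyck).toFinset

/-- The number of returns: east steps ending on the diagonal `y = x`. -/
def returns (D : List Bool) : ℕ :=
  ((List.range D.length).filter fun i =>
    (D[i]? == some false) &&
    ((D.take (i + 1)).count true == (D.take (i + 1)).count false)).length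

/-- `ldr D`: the `y`-coordinate of the midpoint of the last double rise
(last pair of consecutive north steps), `0` if there is no double rise. -/
def ldr (D : List Bool) : ℕ :=
  match ((List.range D.length).filter fun i =>
      (D[i]? == some true) && (D[i+1]? == some true)).getLast? with
  | some i => (D.take (i + 1)).count true
  | none => 0

/-- The set of `x`-coordinates (plus 1) of the north steps of `D`. -/
def rises (D : List Bool) : Finset ℕ :=
  (((List.range D.length).filter fun i => D[i]? == some true).map
    fun i => (D.take i).count false + 1).toFinset

/-- The multiset of `x`-coordinates (plus 1) of the north steps of `D`. -/
def risesM (D : List Bool) : Multiset ℕ :=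
  ↑(((List.range D.length).filter fun i => D[i]? == some true).map
    fun i => (D.take i).count false + 1)

/-- `D` ends with a single east step: its last maximal run of east steps has
length one, i.e. `D` ends with a north step followed by one east step. -/
def EndsSingleEast (D : List Bool) : Prop :=
  ∃ P, D = P ++ [true, false]

/-- `R` contains only single rises: no two consecutive north steps. -/
def SingleRises (R : List Bool) : Prop :=
  ∀ i, ¬ (R[i]? = some true ∧ R[i+1]? = some true)

/-- A prime Dyck path: a Dyck path whose only return is its final east step. -/
def IsPrimeDyck (Q : List Bool) : Prop :=
  isDyck Q = true ∧ Q ≠ [] ∧ returns Q = 1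

/-- Concatenation `n₀ Q₁ n₁ Q₂ ⋯` of runs of north steps and paths, encoded as a
list of pairs `(nᵢ₋₁, Qᵢ)`. -/
def primeBlocks (l : List (ℕ × List Bool)) : List Bool :=
  (l.map fun p => List.replicate p.1 true ++ p.2).flatten

/-!
Only the heights (north minus east steps) of prefixes matter, and replacing a prefix of a
ballot word by another ballot word of at least the same height yields a ballot word.
Hence `φ(D)`, which exchanges `n₀` with `Q₁ n₁ ⋯ Q_k`, is again a Dyck path. For the returns,
write the prime path `Q R` as `N M E` with `M = (n₀ - 1) Q₁ n₁ ⋯ Q_k R'` a Dyck path. After `P`,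
`φ(D)` continues with `Q₁` and then `N ((n₁ - 1) Q₂ ⋯ Q_k n₀) R' E`, which is prime by the same
replacement argument; this is where `n₁ ≠ ∅` is needed, to supply the initial `N`. So `φ(D)`
has the returns of `P`, one in `Q₁` and one at the end, one more than `D`.
The last double rise of `φ(D)` is the top of `n₀` followed by the first step of `R`, at height
`#north(P Q)`. In `D` it lies one lower, just below the last peak of `Q`: by maximality of `R`,
the last north step of `Q` is preceded by another north step.
-/

def height (L : List Bool) : ℤ := L.count true - L.count false

@[simp] lemma height_nil : height [] = 0 := by simp [height]

@[simp] lemma height_cons (b : Bool) (L : List Bool) :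
    height (b :: L) = (if b then 1 else -1) + height L := by
  cases b <;> simp [height] <;> ring

@[simp] lemma height_append (A B : List Bool) : height (A ++ B) = height A + height B := by
  simp only [height, List.count_append]; push_cast; ring

@[simp] lemma height_replicate_true (n : ℕ) : height (List.replicate n true) = n := by
  simp [height, List.count_replicate]

lemma height_eq_zero_iff {L : List Bool} : height L = 0 ↔ L.count true = L.count false := by
  simp [height, sub_eq_zero]

def IsBallot (L : List Bool) : Prop := ∀ k, 0 ≤ height (L.take k)

lemma IsBallot.height_nonneg_of_eq_append {L A C : List Bool} (h : IsBallot L)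
    (hL : L = A ++ C) : 0 ≤ height A := by
  simpa [hL] using h A.length

lemma IsBallot.height_nonneg {L : List Bool} (h : IsBallot L) : 0 ≤ height L :=
  h.height_nonneg_of_eq_append (List.append_nil L).symm

lemma IsBallot.of_append_left {A C : List Bool} (h : IsBallot (A ++ C)) : IsBallot A := fun k =>
  h.height_nonneg_of_eq_append (by rw [← List.append_assoc, List.take_append_drop])

lemma IsBallot.append_of_height_le {X Y R : List Bool} (hXR : IsBallot (X ++ R))
    (hY : IsBallot Y) (h : height X ≤ height Y) : IsBallot (Y ++ R) := by
  intro k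
  rw [List.take_append, height_append]
  rcases le_or_gt k Y.length with hk | hk
  · simpa [Nat.sub_eq_zero_of_le hk] using hY k
  · have := hXR.height_nonneg_of_eq_append
      (by rw [List.append_assoc, List.take_append_drop] :
        X ++ R = (X ++ R.take (k - Y.length)) ++ R.drop (k - Y.length))
    rw [List.take_of_length_le hk.le]
    simp only [height_append] at this
    linarith

lemma IsBallot.append {X Y : List Bool} (hX : IsBallot X) (hY : IsBallot Y) :
    IsBallot (X ++ Y) :=
  (show IsBallot ([] ++ Y) from hY).append_of_height_le hX
    (by simpa using hX.height_nonneg)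

lemma isBallot_replicate_true (n : ℕ) : IsBallot (List.replicate n true) := fun k => by
  simp [List.take_replicate]

lemma primeBlocks_cons (n : ℕ) (Q : List Bool) (l : List (ℕ × List Bool)) :
    primeBlocks ((n, Q) :: l) = List.replicate n true ++ Q ++ primeBlocks l := by
  simp [primeBlocks]

lemma isBallot_primeBlocks {l : List (ℕ × List Bool)} (h : ∀ p ∈ l, IsBallot p.2) :
    IsBallot (primeBlocks l) := by
  induction l with
  | nil => exact fun k => by simp [primeBlocks]
  | cons p l ih =>
    rw [primeBlocks_cons]
    exact ((isBallot_replicate_true _).append (h p (by simp))).append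
      (ih fun q hq => h q (by simp [hq]))

lemma isDyck_iff {L : List Bool} : isDyck L = true ↔ IsBallot L ∧ height L = 0 := by
  have hpre : ∀ k, 0 ≤ height (L.take k) ↔ (L.take k).count false ≤ (L.take k).count true :=
    fun k => by simp [height]
  simp only [isDyck, Bool.and_eq_true, List.all_eq_true, List.mem_range, decide_eq_true_eq,
    beq_iff_eq, height_eq_zero_iff, IsBallot, hpre]
  refine and_congr_left fun _ => ⟨fun h k => ?_, fun h k _ => h k⟩
  rcases Nat.lt_or_ge k (L.length + 1) with hk | hk
  · exact h k hk
  · simpa [List.take_of_length_le (by omega : L.length ≤ k)] using h L.length (by omega)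

lemma isDyck_of_mem_dyckPaths {n : ℕ} {D : List Bool} (hD : D ∈ dyckPaths n) :
    isDyck D = true := by
  simp only [dyckPaths, List.mem_toFinset, List.mem_filter] at hD
  exact hD.2

lemma isDyck_append_of_height_eq {X Y R : List Bool} (hXR : isDyck (X ++ R) = true)
    (hY : IsBallot Y) (h : height Y = height X) : isDyck (Y ++ R) = true := by
  obtain ⟨hb, h0⟩ := isDyck_iff.1 hXR
  exact isDyck_iff.2 ⟨hb.append_of_height_le hY h.ge, by simpa [h] using h0⟩

lemma mem_dyckPaths_append_swap {n : ℕ} {P X Y R : List Bool} (hD : P ++ X ++ Y ++ R ∈ dyckPaths n)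
    (hX : IsBallot X) (hY : IsBallot Y) : P ++ Y ++ X ++ R ∈ dyckPaths n := by
  simp only [dyckPaths, List.mem_toFinset, List.mem_filter, List.mem_permutations] at hD ⊢
  refine ⟨List.Perm.trans ?_ hD.1, ?_⟩
  · simpa only [List.append_assoc] using
      ((List.perm_append_comm (l₁ := Y) (l₂ := X)).append_right R).append_left P
  · have hPb : IsBallot P := (isDyck_iff.1 hD.2).1.of_append_left.of_append_left.of_append_left
    refine isDyck_append_of_height_eq hD.2 ((hPb.append hY).append hX) ?_
    simp; ring

lemma returns_eq_length_filter (L : List Bool) : returns L =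
    ((List.range L.length).filter fun i =>
      L[i]? == some false && height (L.take (i + 1)) == 0).length := by
  simp only [returns, beq_eq_decide, height_eq_zero_iff]

lemma returns_append {A : List Bool} (B : List Bool) (hA : height A = 0) :
    returns (A ++ B) = returns A + returns B := by
  simp only [returns_eq_length_filter, List.length_append, List.range_add, List.filter_append,
    List.filter_map, List.length_map]
  congr 2
  · refine List.filter_congr fun i hi => ?_
    rw [List.mem_range] at hi
    rw [List.getElem?_append_left hi, List.take_append_of_le_length (by omega)]
  · refine List.filter_congr fun i hi => ?_
    rw [Function.comp_apply, List.getElem?_append_right (by omega), List.take_append,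
      List.take_of_length_le (by omega), show A.length + i + 1 - A.length = i + 1 by omega]
    simp [hA]

lemma exists_eq_append_false_of_isDyck {L : List Bool} (hL : isDyck L = true) (hne : L ≠ []) :
    ∃ L₀, L = L₀ ++ [false] := by
  obtain ⟨hb, h0⟩ := isDyck_iff.1 hL
  obtain ⟨L₀, b, rfl⟩ := (List.eq_nil_or_concat' L).resolve_left hne
  have := hb.height_nonneg_of_eq_append rfl
  cases b
  · exact ⟨L₀, rfl⟩
  · simp at h0; omega

lemma one_le_returns {L : List Bool} (hL : isDyck L = true) (hne : L ≠ []) : 1 ≤ returns L := by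
  obtain ⟨L₀, rfl⟩ := exists_eq_append_false_of_isDyck hL hne
  rw [returns_eq_length_filter]
  refine List.length_pos_of_mem (a := L₀.length) (List.mem_filter.2 ⟨by simp, ?_⟩)
  simpa [List.take_of_length_le] using (isDyck_iff.1 hL).2

lemma returns_cons_append_false {M : List Bool} (hM : isDyck M = true) :
    returns (true :: (M ++ [false])) = 1 := by
  obtain ⟨hb, h0⟩ := isDyck_iff.1 hM
  rw [returns_eq_length_filter, show (true :: (M ++ [false])).length = M.length + 1 + 1 by simp,
    List.range_succ, List.filter_append, List.filter_eq_nil_iff.2, List.nil_append]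
  · simp [List.take_of_length_le, h0]
  · intro i hi
    rw [List.mem_range] at hi
    have := hb i
    simp [List.take_append_of_le_length (by omega : i ≤ M.length)]
    omega

lemma IsPrimeDyck.height_pos_of_eq_append {L A C : List Bool} (h : IsPrimeDyck L)
    (hL : L = A ++ C) (hA : A ≠ []) (hC : C ≠ []) : 0 < height A := by
  obtain ⟨hL', -, hret⟩ := h
  obtain ⟨hb, h0⟩ := isDyck_iff.1 hL'
  subst hL
  by_contra hle
  have hA0 : height A = 0 := le_antisymm (not_lt.1 hle) (hb.height_nonneg_of_eq_append rfl)
  have hAD : isDyck A = true := isDyck_iff.2 ⟨hb.of_append_left, hA0⟩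
  have hCD : isDyck C = true := by
    simpa using isDyck_append_of_height_eq (Y := []) hL' (fun k => by simp) (by simp [hA0])
  have := returns_append C hA0
  have := one_le_returns hAD hA
  have := one_le_returns hCD hC
  omega

lemma IsPrimeDyck.exists_eq_cons_append {L : List Bool} (h : IsPrimeDyck L) :
    ∃ M, L = true :: (M ++ [false]) ∧ isDyck M = true := by
  obtain ⟨L₀, rfl⟩ := exists_eq_append_false_of_isDyck h.1 h.2.1
  obtain ⟨hb, h0⟩ := isDyck_iff.1 h.1
  obtain _ | ⟨b, M⟩ := L₀
  · simp at h0
  have hb1 := hb.height_nonneg_of_eq_append (A := [b]) rfl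
  cases b
  · simp at hb1
  refine ⟨M, rfl, isDyck_iff.2 ⟨fun k => ?_, by simpa using h0⟩⟩
  have := h.height_pos_of_eq_append (A := true :: M.take k) (C := M.drop k ++ [false])
    (by simp [← List.append_assoc]) (by simp) (by simp)
  simp at this
  omega

lemma returns_eq_one_of_isPrimeDyck_append {X Y R : List Bool}
    (hXR : IsPrimeDyck (true :: X ++ R)) (hY : IsBallot Y) (h : height Y = height X) :
    returns (true :: Y ++ R) = 1 := by
  obtain ⟨M, hM, hMD⟩ := hXR.exists_eq_cons_append
  simp only [List.cons_append, List.cons.injEq, true_and] at hM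
  rcases List.eq_nil_or_concat' R with rfl | ⟨R₀, b, rfl⟩
  · rw [List.append_nil] at hM
    subst hM
    have := hY.height_nonneg
    simp [(isDyck_iff.1 hMD).2] at h
    omega
  · rw [← List.append_assoc] at hM
    obtain ⟨rfl, hb⟩ := List.append_inj' hM rfl
    obtain rfl : b = false := by simpa using hb
    simpa using returns_cons_append_false (isDyck_append_of_height_eq hMD hY h)

lemma returns_append_isPrimeDyck_append_cons {P Q₁ X Y R : List Bool} (hP : height P = 0)
    (hQ₁ : IsPrimeDyck Q₁) (hXR : IsPrimeDyck (true :: X ++ R)) (hY : IsBallot Y)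
    (h : height Y = height X) :
    returns (P ++ Q₁ ++ true :: Y ++ R) = returns (P ++ true :: X ++ R) + 1 := by
  rw [show P ++ Q₁ ++ true :: Y ++ R = P ++ (Q₁ ++ (true :: Y ++ R)) by simp,
    show P ++ true :: X ++ R = P ++ (true :: X ++ R) by simp, returns_append _ hP,
    returns_append _ hP, returns_append _ (isDyck_iff.1 hQ₁.1).2, hQ₁.2.2, hXR.2.2,
    returns_eq_one_of_isPrimeDyck_append hXR hY h]

lemma returns_rotate_primeBlocks {P Q₁ Q₂ R : List Bool} {m₀ m₁ : ℕ} {l : List (ℕ × List Bool)}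
    (hP : height P = 0) (hQ₁ : IsPrimeDyck Q₁) (hl : ∀ p ∈ (m₁ + 1, Q₂) :: l, IsBallot p.2)
    (hQR : IsPrimeDyck (primeBlocks ((m₀ + 1, Q₁) :: (m₁ + 1, Q₂) :: l) ++ R)) :
    returns (P ++ Q₁ ++ primeBlocks ((m₁ + 1, Q₂) :: l) ++ List.replicate (m₀ + 1) true ++ R) =
      returns (P ++ primeBlocks ((m₀ + 1, Q₁) :: (m₁ + 1, Q₂) :: l) ++ R) + 1 := by
  have hQR' : primeBlocks ((m₀ + 1, Q₁) :: (m₁ + 1, Q₂) :: l) ++ R =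
      true :: (List.replicate m₀ true ++ Q₁ ++ primeBlocks ((m₁ + 1, Q₂) :: l)) ++ R := by
    simp [primeBlocks_cons, List.replicate_succ]
  have hφ : P ++ Q₁ ++ primeBlocks ((m₁ + 1, Q₂) :: l) ++ List.replicate (m₀ + 1) true ++ R =
      P ++ Q₁ ++ true :: (List.replicate m₁ true ++ Q₂ ++ primeBlocks l ++
        List.replicate (m₀ + 1) true) ++ R := by
    simp [primeBlocks_cons, List.replicate_succ]
  have hD : P ++ primeBlocks ((m₀ + 1, Q₁) :: (m₁ + 1, Q₂) :: l) ++ R =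
      P ++ true :: (List.replicate m₀ true ++ Q₁ ++ primeBlocks ((m₁ + 1, Q₂) :: l)) ++ R := by
    simp [primeBlocks_cons, List.replicate_succ]
  rw [hφ, hD]
  refine returns_append_isPrimeDyck_append_cons hP hQ₁ (hQR' ▸ hQR) ?_ ?_
  · exact (((isBallot_replicate_true m₁).append (hl (m₁ + 1, Q₂) (by simp))).append
      (isBallot_primeBlocks fun p hp => hl p (by simp [hp]))).append (isBallot_replicate_true _)
  · simp [primeBlocks_cons, (isDyck_iff.1 hQ₁.1).2]
    ring

lemma ldr_append_of_singleRises {A S : List Bool} (hA : A.getLast? = some true)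
    (hS : S.head? = some true) (hS' : SingleRises S) : ldr (A ++ S) = A.count true := by
  obtain ⟨A₀, rfl⟩ := List.getLast?_eq_some_iff.1 hA
  obtain ⟨S₀, rfl⟩ := List.head?_eq_some_iff.1 hS
  set L := A₀ ++ [true] ++ true :: S₀
  have hlen : L.length = A₀.length + 1 + (S₀.length + 1) := by simp [L]; omega
  have hafter : ((List.range (S₀.length + 1)).map (A₀.length + 1 + ·)).filter
      (fun i => (L[i]? == some true) && (L[i + 1]? == some true)) = [] := by
    simp only [List.filter_eq_nil_iff, List.mem_map, List.mem_range, forall_exists_index, and_imp]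
    rintro _ i - rfl
    have hget : ∀ j, L[A₀.length + 1 + j]? = (true :: S₀)[j]? := fun j => by
      rw [List.getElem?_append_right (by simp)]
      simp
    rw [add_assoc _ i 1, hget, hget]
    simpa using hS' i
  have hlast : ((List.range L.length).filter fun i =>
      (L[i]? == some true) && (L[i + 1]? == some true)).getLast? = some A₀.length := by
    rw [hlen, List.range_add, List.filter_append, hafter, List.range_succ, List.filter_append]
    simp [L]
  unfold ldr
  rw [hlast]
  simp only
  rw [List.take_left' (by simp)]

lemma singleRises_cons_replicate_false_append {a : ℕ} (ha : 0 < a) {R : List Bool}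
    (hR : SingleRises R) : SingleRises (true :: (List.replicate a false ++ R)) := by
  rintro (_ | i) ⟨h1, h2⟩
  · obtain ⟨a, rfl⟩ := Nat.exists_eq_succ_of_ne_zero ha.ne'
    simp at h2
  · simp only [List.getElem?_cons_succ] at h1 h2
    rcases lt_or_ge i a with hi | hi
    · simp [List.getElem?_append_left, hi] at h1
    · rw [List.getElem?_append_right (by simpa)] at h1
      rw [List.getElem?_append_right (by simp; omega)] at h2
      simp only [List.length_replicate] at h1 h2
      exact hR (i - a) ⟨h1, by rwa [show i + 1 - a = i - a + 1 by omega] at h2⟩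

lemma exists_eq_append_cons_replicate_false {L : List Bool} (h : true ∈ L) :
    ∃ E a, L = E ++ true :: List.replicate a false := by
  induction L using List.reverseRecOn with
  | nil => simp at h
  | append_singleton M b ih =>
    cases b
    · obtain ⟨E, a, rfl⟩ := ih (by simpa using h)
      exact ⟨E, a + 1, by simp [List.replicate_succ']⟩
    · exact ⟨M, 0, rfl⟩

lemma ldr_add_one_of_maximal {D P Q R : List Bool} (hsplit : D = P ++ Q ++ R)
    (hR : SingleRises R) (hQl : Q.getLast? = some false) (hprime : IsPrimeDyck (Q ++ R))
    (hmax : ∀ P' Q' R' : List Bool, D = P' ++ Q' ++ R' → SingleRises R' →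
      (R' = [] ∨ R'.head? = some true) → Q'.getLast? = some false →
      IsPrimeDyck (Q' ++ R') → R'.length ≤ R.length)
    (hQ : 2 ≤ Q.count true) : ldr D + 1 = (P ++ Q).count true := by
  obtain ⟨E, a, rfl⟩ :=
    exists_eq_append_cons_replicate_false (List.count_pos_iff.1 (by omega : 0 < Q.count true))
  have ha : 0 < a := by
    rcases a with _ | a
    · simp at hQl
    · omega
  have hE : E ≠ [] := by rintro rfl; simp [List.count_replicate] at hQ
  have hS := singleRises_cons_replicate_false_append ha hR
  have hD : D = P ++ E ++ true :: (List.replicate a false ++ R) := by simp [hsplit]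
  obtain ⟨c, hc⟩ : ∃ c, E.getLast? = some c := Option.ne_none_iff_exists'.1 (by simpa using hE)
  cases c
  · -- otherwise `true :: (List.replicate a false ++ R)` is an admissible suffix longer than `R`
    have := hmax P E _ hD hS (Or.inr rfl) hc (by simpa using hprime)
    simp at this
  · rw [hD, ldr_append_of_singleRises (by rw [List.getLast?_append_of_ne_nil _ hE, hc]) rfl hS]
    simp [List.count_replicate, add_assoc]

theorem stmt6_general (n : ℕ) (D P Q R : List Bool) (n0 : ℕ) (Q1 : List Bool)
    (rest : List (ℕ × List Bool))
    (hD : D ∈ dyckPaths n)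
    (hsplit : D = P ++ Q ++ R)
    (hR : SingleRises R) (hRh : R = [] ∨ R.head? = some true)
    (hQl : Q.getLast? = some false)
    (hprime : IsPrimeDyck (Q ++ R))
    (hmax : ∀ P' Q' R' : List Bool, D = P' ++ Q' ++ R' → SingleRises R' →
      (R' = [] ∨ R'.head? = some true) → Q'.getLast? = some false →
      IsPrimeDyck (Q' ++ R') → R'.length ≤ R.length)
    (hdecomp : Q = primeBlocks ((n0, Q1) :: rest))
    (hQ1 : IsPrimeDyck Q1) (hprimes : ∀ p ∈ rest, IsPrimeDyck p.2)
    (hn0 : 1 ≤ n0)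
    (hcase : rest ≠ [] ∧ 1 ≤ (rest.headI).1) :
    (P ++ Q1 ++ primeBlocks rest ++ List.replicate n0 true ++ R) ∈ dyckPaths n ∧
    returns (P ++ Q1 ++ primeBlocks rest ++ List.replicate n0 true ++ R) =
      returns D + 1 ∧
    ldr (P ++ Q1 ++ primeBlocks rest ++ List.replicate n0 true ++ R) =
      ldr D + 1 := by
  obtain ⟨hne, hn1⟩ := hcase
  obtain ⟨⟨n1, Q2⟩, t, rfl⟩ := List.exists_cons_of_ne_nil hne
  obtain ⟨m0, rfl⟩ := Nat.exists_eq_add_of_le' hn0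
  obtain ⟨m1, rfl⟩ := Nat.exists_eq_add_of_le' (show 1 ≤ n1 from hn1)
  obtain ⟨hQ1b, hQ10⟩ := isDyck_iff.1 hQ1.1
  have hrestb : ∀ p ∈ (m1 + 1, Q2) :: t, IsBallot p.2 :=
    fun p hp => (isDyck_iff.1 (hprimes p hp).1).1
  have hBb := isBallot_primeBlocks hrestb
  have hQR0 : height (Q ++ R) = 0 := (isDyck_iff.1 hprime.1).2
  have hP0 : height P = 0 := by
    have := (isDyck_iff.1 (isDyck_of_mem_dyckPaths hD)).2
    rw [hsplit, List.append_assoc, height_append, hQR0, add_zero] at this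
    exact this
  have hRne : R ≠ [] := by
    rintro rfl
    have := hBb.height_nonneg
    simp [hdecomp, primeBlocks_cons (m0 + 1), hQ10] at hQR0
    omega
  refine ⟨?_, ?_, ?_⟩
  · simpa using mem_dyckPaths_append_swap (by simpa [hsplit, hdecomp, primeBlocks_cons] using hD)
      (isBallot_replicate_true _) (hQ1b.append hBb)
  · rw [hsplit, hdecomp]
    exact returns_rotate_primeBlocks hP0 hQ1 hrestb (hdecomp ▸ hprime)
  · rw [ldr_append_of_singleRises (by simp [List.getLast?_replicate]) (hRh.resolve_left hRne) hR,
      ldr_add_one_of_maximal hsplit hR hQl hprime hmax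
        (by simp [hdecomp, primeBlocks_cons]; omega)]
    simp [hdecomp, primeBlocks_cons]
    omega

/-- Case (1) of the map `φ`: if `n₁ ≠ ∅`, then
`φ(D) = P Q₁ n₁ ⋯ nₖ Qₖ n₀ R` is a Dyck path of the same semilength with one
more return and `ldr` one larger. -/
theorem stmt6 (n : ℕ) (D P Q R : List Bool) (n0 : ℕ) (Q1 : List Bool)
    (rest : List (ℕ × List Bool))
    (hD : D ∈ dyckPaths n) (h1 : ¬ EndsSingleEast D) (h2 : ldr D < n - 1)
    (hsplit : D = P ++ Q ++ R)
    (hR : SingleRises R) (hRh : R = [] ∨ R.head? = some true)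
    (hQl : Q.getLast? = some false)
    (hprime : IsPrimeDyck (Q ++ R))
    (hmax : ∀ P' Q' R' : List Bool, D = P' ++ Q' ++ R' → SingleRises R' →
      (R' = [] ∨ R'.head? = some true) → Q'.getLast? = some false →
      IsPrimeDyck (Q' ++ R') → R'.length ≤ R.length)
    (hdecomp : Q = primeBlocks ((n0, Q1) :: rest))
    (hQ1 : IsPrimeDyck Q1) (hprimes : ∀ p ∈ rest, IsPrimeDyck p.2)
    (hn0 : 1 ≤ n0)
    (hcase : rest ≠ [] ∧ 1 ≤ (rest.headI).1) :
    (P ++ Q1 ++ primeBlocks rest ++ List.replicate n0 true ++ R) ∈ dyckPaths n ∧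
    returns (P ++ Q1 ++ primeBlocks rest ++ List.replicate n0 true ++ R) =
      returns D + 1 ∧
    ldr (P ++ Q1 ++ primeBlocks rest ++ List.replicate n0 true ++ R) =
      ldr D + 1 :=
  stmt6_general n D P Q R n0 Q1 rest hD hsplit hR hRh hQl hprime hmax hdecomp hQ1 hprimes hn0 hcase
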